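/- arXiv:2111.06993 — 2 statements merged into one kernel-verified Lean document; each statement's English description precedes it below -/
import Mathlib

section
/- Let G be a uniform grid, d ∈ [0,N], and E ⊆ [0,N] with d < min E. Then every function on the union of layers E̲ representable by a polynomial of degree at most d lies in the span of the falling-factorial monomials Y^(β) with β ∈ G and wt(β) ∈ [d+1, d+|E|]. -/
open scoped Classical
open Polynomial


noncomputable def Yeval (n : ℕ) (β : Fin n → ℕ) (x : Fin n → ℝ) : ℝ :=
  ∏ i, ∏ t ∈ Finset.range (β i), (x i - (t : ℝ))

lemma Yeval_succ (n : ℕ) (β : Fin n → ℕ) (x : Fin n → ℝ) (i : Fin n) :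
    Yeval n (Function.update β i (β i + 1)) x = Yeval n β x * (x i - (β i : ℝ)) := by
  unfold Yeval
  rw [← Finset.mul_prod_erase Finset.univ _ (Finset.mem_univ i),
    ← Finset.mul_prod_erase Finset.univ
      (fun j => ∏ t ∈ Finset.range (β j), (x j - (t : ℝ))) (Finset.mem_univ i)]
  have h1 : ∏ j ∈ Finset.univ.erase i, ∏ t ∈ Finset.range (Function.update β i (β i + 1) j), (x j - (t : ℝ))
      = ∏ j ∈ Finset.univ.erase i, ∏ t ∈ Finset.range (β j), (x j - (t : ℝ)) :=
    Finset.prod_congr rfl (fun j hj => by rw [Function.update_of_ne (Finset.ne_of_mem_erase hj)])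
  rw [h1, Function.update_self, Finset.prod_range_succ]
  ring

lemma Yeval_sum_succ (n : ℕ) (β : Fin n → ℕ) (x : Fin n → ℝ) :
    ∑ i, Yeval n (Function.update β i (β i + 1)) x
      = Yeval n β x * ((∑ i, x i) - (∑ i, (β i : ℝ))) := by
  simp only [Yeval_succ, ← Finset.mul_sum, Finset.sum_sub_distrib]


lemma newton_deg (c : ℝ) (r : ℕ) :
    (∏ j ∈ Finset.range r, (X - C (c + (j:ℕ)))).natDegree = r := by
  rw [Polynomial.natDegree_prod_of_monic _ _ (fun j _ => monic_X_sub_C _)]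
  rw [Finset.sum_congr rfl (fun j _ => Polynomial.natDegree_X_sub_C (c + (j:ℕ)))]
  simp

lemma newton_coeffs_zero (c : ℝ) : ∀ q (a : ℕ → ℝ),
    (∑ r ∈ Finset.range q, C (a r) * ∏ j ∈ Finset.range r, (X - C (c + j)) = 0) →
    ∀ r < q, a r = 0 := by
  intro q
  induction q with
  | zero => intro a _ r hr; omega
  | succ q ih =>
    intro a ha
    have hmon : ∀ r : ℕ, (∏ j ∈ Finset.range r, (X - C (c + (j:ℕ)))).Monic :=
      fun r => monic_prod_of_monic _ _ (fun j _ => monic_X_sub_C _)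
    rw [Finset.sum_range_succ] at ha
    have haq : a q = 0 := by
      have h2 := congrArg (fun p => Polynomial.coeff p q) ha
      have h3 : (∏ j ∈ Finset.range q, (X - C (c + (j:ℕ)))).coeff q = 1 := by
        have := (hmon q).coeff_natDegree
        rwa [newton_deg] at this
      simp only [Polynomial.coeff_add, Polynomial.finset_sum_coeff, Polynomial.coeff_zero,
        Polynomial.coeff_C_mul, h3, mul_one] at h2
      rwa [Finset.sum_eq_zero, zero_add] at h2
      intro r hr
      rw [Polynomial.coeff_eq_zero_of_natDegree_lt, mul_zero]
      rw [newton_deg]; exact Finset.mem_range.1 hr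
    rw [haq, map_zero, zero_mul, add_zero] at ha
    intro r hr
    rcases Nat.lt_succ_iff_lt_or_eq.1 hr with h | h
    · exact ih a ha r h
    · rw [h]; exact haq

lemma newton_interp (E : Finset ℕ) (c : ℝ) (w : ℕ → ℝ) :
    ∃ a : ℕ → ℝ, ∀ e ∈ E, ∑ r ∈ Finset.range E.card,
      a r * ∏ j ∈ Finset.range r, ((e : ℝ) - c - (j : ℕ)) = w e := by
  classical
  set q := E.card with hq
  by_cases hE : E = ∅
  · exact ⟨0, fun e he => by simp [hE] at he⟩
  have hpos : 0 < q := Finset.card_pos.2 (Finset.nonempty_iff_ne_empty.2 hE)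
  -- the linear map
  let Φ : (Fin q → ℝ) →ₗ[ℝ] ({e // e ∈ E} → ℝ) :=
    { toFun := fun a e => ∑ r : Fin q, a r * ∏ j ∈ Finset.range (r : ℕ), (((e : ℕ) : ℝ) - c - (j : ℕ))
      map_add' := by intro a b; funext e; simp [add_mul, Finset.sum_add_distrib]
      map_smul' := by intro m a; funext e; simp [Finset.mul_sum, mul_assoc]  }
  have hinj : Function.Injective Φ := by
    rw [← LinearMap.ker_eq_bot, LinearMap.ker_eq_bot']
    intro a ha
    set a' : ℕ → ℝ := fun r => if h : r < q then a ⟨r, h⟩ else 0 with ha'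
    set P : ℝ[X] := ∑ r ∈ Finset.range q, C (a' r) * ∏ j ∈ Finset.range r, (X - C (c + j)) with hP
    have hPz : P = 0 := by
      apply Polynomial.eq_zero_of_natDegree_lt_card_of_eval_eq_zero P
        (f := fun e : {e // e ∈ E} => ((e : ℕ) : ℝ))
        (fun e₁ e₂ h12 => Subtype.val_injective (Nat.cast_injective h12))
      · intro e
        have he := congrFun ha e
        simp only [Φ, LinearMap.coe_mk, AddHom.coe_mk, Pi.zero_apply] at he
        rw [hP]
        simp only [Polynomial.eval_finset_sum, Polynomial.eval_mul, Polynomial.eval_C,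
          Polynomial.eval_prod, Polynomial.eval_sub, Polynomial.eval_X]
        rw [← he, Finset.sum_range fun r => a' r * ∏ j ∈ Finset.range r, (((e:ℕ):ℝ) - (c + (j:ℕ)))]
        apply Finset.sum_congr rfl
        intro r _
        rw [ha']
        simp only [r.isLt, dif_pos]
        congr 1
        exact Finset.prod_congr rfl fun j _ => by ring
      · rw [Fintype.card_coe, ← hq]
        calc P.natDegree ≤ q - 1 := by
              apply Polynomial.natDegree_sum_le_of_forall_le
              intro r hr
              apply le_trans (Polynomial.natDegree_C_mul_le _ _)
              rw [newton_deg]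
              have := Finset.mem_range.1 hr
              omega
          _ < q := by omega
    funext r
    have := newton_coeffs_zero c q a' hPz r r.isLt
    simpa [ha', r.isLt] using this
  have hsurj : Function.Surjective Φ :=
    (LinearMap.injective_iff_surjective_of_finrank_eq_finrank
      (by simp [Module.finrank_pi, hq])).1 hinj
  obtain ⟨asol, hasol⟩ := hsurj (fun e => w e)
  refine ⟨fun r => if h : r < q then asol ⟨r, h⟩ else 0, fun e he => ?_⟩
  have h2 := congrFun hasol ⟨e, he⟩
  simp only [Φ, LinearMap.coe_mk, AddHom.coe_mk] at h2
  rw [Finset.sum_range fun r => (if h : r < q then asol ⟨r, h⟩ else 0) *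
    ∏ j ∈ Finset.range r, ((e : ℝ) - c - (j : ℕ))]
  rw [← h2]
  apply Finset.sum_congr rfl
  intro r _
  simp [r.isLt]

section Main2


variable (n : ℕ) (k : Fin n → ℕ) (E : Finset ℕ) (d : ℕ)

/-- grid points with weight in E -/
abbrev GPt := {x : ∀ i, Fin (k i) // (∑ i, (x i : ℕ)) ∈ E}

/-- restricted falling factorial -/
noncomputable def Yf (γ : Fin n → ℕ) (x : GPt n k E) : ℝ :=
  Yeval n γ (fun i => ((x.1 i : ℕ) : ℝ))

/-- the target span -/
noncomputable def Tspan : Submodule ℝ (GPt n k E → ℝ) :=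
  Submodule.span ℝ (Set.range
    (fun β : {β : ∀ i, Fin (k i) // (∑ i, (β i : ℕ)) ∈ Finset.Icc (d + 1) (d + E.card)} =>
      (fun x : GPt n k E => Yeval n (fun i => (β.1 i : ℕ)) (fun i => ((x.1 i : ℕ) : ℝ)))))

lemma memT (γ : Fin n → ℕ) (hγ : (∑ i, γ i) ∈ Finset.Icc (d + 1) (d + E.card)) :
    Yf n k E γ ∈ Tspan n k E d := by
  by_cases hg : ∀ i, γ i < k i
  · apply Submodule.subset_span
    refine ⟨⟨fun i => ⟨γ i, hg i⟩, ?_⟩, rfl⟩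
    simpa using hγ
  · push_neg at hg
    obtain ⟨i, hi⟩ := hg
    have h0 : Yf n k E γ = 0 := by
      funext x
      show Yeval n γ _ = 0
      unfold Yeval
      apply Finset.prod_eq_zero (Finset.mem_univ i)
      apply Finset.prod_eq_zero (i := ((x.1 i : ℕ)))
      · exact Finset.mem_range.2 (lt_of_lt_of_le (x.1 i).isLt hi)
      · simp
    rw [h0]
    exact zero_mem _

/-- the span of one weight level (unrestricted γ) -/
noncomputable def Lspan (s : ℕ) : Submodule ℝ (GPt n k E → ℝ) :=
  Submodule.span ℝ {g | ∃ γ : Fin n → ℕ, (∑ i, γ i) = s ∧ g = Yf n k E γ}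

lemma key_mul (s : ℕ) (g : GPt n k E → ℝ) (hg : g ∈ Lspan n k E s) :
    (fun x => ((∑ i, ((x.1 i : ℕ) : ℝ)) - (s : ℝ)) * g x) ∈ Lspan n k E (s + 1) := by
  induction hg using Submodule.span_induction with
  | mem g hgmem =>
    obtain ⟨γ, hγs, rfl⟩ := hgmem
    have heq : (fun x : GPt n k E => ((∑ i, ((x.1 i : ℕ) : ℝ)) - (s : ℝ)) * Yf n k E γ x)
        = ∑ i : Fin n, Yf n k E (Function.update γ i (γ i + 1)) := by
      funext x
      rw [Finset.sum_apply]
      have := Yeval_sum_succ n γ (fun i => ((x.1 i : ℕ) : ℝ))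
      unfold Yf
      rw [this]
      have hc : (∑ i, ((γ i : ℕ) : ℝ)) = (s : ℝ) := by
        rw [← hγs]; push_cast; rfl
      rw [hc, mul_comm]
    rw [heq]
    apply Submodule.sum_mem
    intro i _
    apply Submodule.subset_span
    refine ⟨Function.update γ i (γ i + 1), ?_, rfl⟩
    rw [Finset.sum_update_of_mem (Finset.mem_univ i)]
    have h2 : γ i + ∑ x ∈ Finset.univ \ {i}, γ x = ∑ x, γ x := by
      rw [← Finset.erase_eq]
      exact Finset.add_sum_erase _ γ (Finset.mem_univ i)
    omega
  | zero =>
    have : (fun x : GPt n k E => ((∑ i, ((x.1 i : ℕ) : ℝ)) - (s : ℝ)) * (0 : GPt n k E → ℝ) x) = 0 := by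
      funext x; simp
    rw [this]; exact zero_mem _
  | add g h _ _ ihg ihh =>
    have : (fun x : GPt n k E => ((∑ i, ((x.1 i : ℕ) : ℝ)) - (s : ℝ)) * (g + h) x)
        = (fun x => ((∑ i, ((x.1 i : ℕ) : ℝ)) - (s : ℝ)) * g x)
          + (fun x => ((∑ i, ((x.1 i : ℕ) : ℝ)) - (s : ℝ)) * h x) := by
      funext x; simp [mul_add]
    rw [this]; exact add_mem ihg ihh
  | smul c g _ ihg =>
    have : (fun x : GPt n k E => ((∑ i, ((x.1 i : ℕ) : ℝ)) - (s : ℝ)) * (c • g) x)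
        = c • (fun x => ((∑ i, ((x.1 i : ℕ) : ℝ)) - (s : ℝ)) * g x) := by
      funext x; simp; ring
    rw [this]; exact Submodule.smul_mem _ c ihg

lemma levels (β : Fin n → ℕ) (m : ℕ) :
    (fun x : GPt n k E =>
      (∏ j ∈ Finset.range m, ((∑ i, ((x.1 i : ℕ) : ℝ)) - ((∑ i, β i : ℕ) : ℝ) - (j : ℕ))) * Yf n k E β x)
      ∈ Lspan n k E ((∑ i, β i) + m) := by
  induction m with
  | zero =>
    simp only [Finset.range_zero, Finset.prod_empty, one_mul, Nat.add_zero]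
    exact Submodule.subset_span ⟨β, rfl, rfl⟩
  | succ m ih =>
    have heq : (fun x : GPt n k E =>
        (∏ j ∈ Finset.range (m + 1), ((∑ i, ((x.1 i : ℕ) : ℝ)) - ((∑ i, β i : ℕ) : ℝ) - (j : ℕ))) * Yf n k E β x)
        = (fun x => ((∑ i, ((x.1 i : ℕ) : ℝ)) - (((∑ i, β i) + m : ℕ) : ℝ)) *
            ((∏ j ∈ Finset.range m, ((∑ i, ((x.1 i : ℕ) : ℝ)) - ((∑ i, β i : ℕ) : ℝ) - (j : ℕ))) * Yf n k E β x)) := by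
      funext x
      rw [Finset.prod_range_succ]
      push_cast
      ring
    rw [heq, ← Nat.add_assoc]
    exact key_mul n k E _ _ ih



lemma low_mem (n : ℕ) (k : Fin n → ℕ) (E : Finset ℕ) (d : ℕ) (hdE : ∀ e ∈ E, d < e)
    (β : Fin n → ℕ) (hβd : (∑ i, β i) ≤ d) : Yf n k E β ∈ Tspan n k E d := by
  set wn := ∑ i, β i with hwn
  set m0 := d + 1 - wn with hm0
  set q := E.card with hq
  obtain ⟨a, ha⟩ := newton_interp E ((wn : ℝ) + (m0 : ℕ))
    (fun e => (∏ j ∈ Finset.range m0, ((e : ℝ) - (wn : ℝ) - (j : ℕ)))⁻¹)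
  have hone : ∀ e ∈ E,
      (∑ r ∈ Finset.range q, a r * ∏ j ∈ Finset.range (m0 + r), ((e : ℝ) - (wn : ℝ) - (j : ℕ))) = 1 := by
    intro e he
    have hg : (0:ℝ) < ∏ j ∈ Finset.range m0, ((e : ℝ) - (wn : ℝ) - (j : ℕ)) := by
      apply Finset.prod_pos
      intro j hj
      have hj' := Finset.mem_range.1 hj
      have hlt : (wn + j : ℕ) < e := by have := hdE e he; omega
      have h2 : ((wn + j : ℕ) : ℝ) < (e : ℝ) := Nat.cast_lt.2 hlt
      push_cast at h2
      linarith
    have hsplit : ∀ r : ℕ, ∏ j ∈ Finset.range (m0 + r), ((e : ℝ) - (wn : ℝ) - (j : ℕ))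
        = (∏ j ∈ Finset.range m0, ((e : ℝ) - (wn : ℝ) - (j : ℕ)))
          * ∏ j ∈ Finset.range r, ((e : ℝ) - ((wn : ℝ) + (m0 : ℕ)) - (j : ℕ)) := by
      intro r
      rw [Finset.prod_range_add]
      congr 1
      apply Finset.prod_congr rfl
      intro j _
      push_cast
      ring
    calc (∑ r ∈ Finset.range q, a r * ∏ j ∈ Finset.range (m0 + r), ((e : ℝ) - (wn : ℝ) - (j : ℕ)))
        = (∏ j ∈ Finset.range m0, ((e : ℝ) - (wn : ℝ) - (j : ℕ)))
          * ∑ r ∈ Finset.range q, a r * ∏ j ∈ Finset.range r, ((e : ℝ) - ((wn : ℝ) + (m0 : ℕ)) - (j : ℕ)) := by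
          rw [Finset.mul_sum]
          apply Finset.sum_congr rfl
          intro r _
          rw [hsplit r]
          ring
      _ = 1 := by
          rw [ha e he]
          exact mul_inv_cancel₀ hg.ne'
  have hfun : Yf n k E β = ∑ r ∈ Finset.range q, a r •
      (fun x : GPt n k E =>
        (∏ j ∈ Finset.range (m0 + r), ((∑ i, ((x.1 i : ℕ) : ℝ)) - ((∑ i, β i : ℕ) : ℝ) - (j : ℕ)))
          * Yf n k E β x) := by
    funext x
    rw [Finset.sum_apply]
    simp only [Pi.smul_apply, smul_eq_mul]
    have hx : (∑ i, ((x.1 i : ℕ) : ℝ)) = (((∑ i, (x.1 i : ℕ)) : ℕ) : ℝ) := by push_cast; rfl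
    calc (Yf n k E β x)
        = (∑ r ∈ Finset.range q, a r *
            ∏ j ∈ Finset.range (m0 + r), (((∑ i, (x.1 i : ℕ) : ℕ) : ℝ) - (wn : ℝ) - (j : ℕ))) * Yf n k E β x := by
          rw [hone _ x.2, one_mul]
      _ = ∑ r ∈ Finset.range q, a r *
            ((∏ j ∈ Finset.range (m0 + r), ((∑ i, ((x.1 i : ℕ) : ℝ)) - ((∑ i, β i : ℕ) : ℝ) - (j : ℕ)))
              * Yf n k E β x) := by
          rw [Finset.sum_mul]
          apply Finset.sum_congr rfl
          intro r _
          rw [hx, ← hwn]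
          ring
  rw [hfun]
  apply Submodule.sum_mem
  intro r hr
  apply Submodule.smul_mem
  have hle : Lspan n k E (wn + (m0 + r)) ≤ Tspan n k E d := by
    apply Submodule.span_le.2
    rintro g ⟨γ, hγ, rfl⟩
    apply memT
    rw [hγ]
    have hr' := Finset.mem_range.1 hr
    refine Finset.mem_Icc.2 ⟨by omega, by omega⟩
  exact hle (levels n k E β (m0 + r))

noncomputable def Wspan (n : ℕ) (k : Fin n → ℕ) (E : Finset ℕ) (s : ℕ) : Submodule ℝ (GPt n k E → ℝ) :=
  Submodule.span ℝ {g | ∃ β : Fin n → ℕ, (∑ i, β i) ≤ s ∧ g = Yf n k E β}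

lemma coord_mul (n : ℕ) (k : Fin n → ℕ) (E : Finset ℕ) (i0 : Fin n) (s : ℕ)
    (g : GPt n k E → ℝ) (hg : g ∈ Wspan n k E s) :
    (fun x => ((x.1 i0 : ℕ) : ℝ) * g x) ∈ Wspan n k E (s + 1) := by
  induction hg using Submodule.span_induction with
  | mem g hgmem =>
    obtain ⟨β, hβs, rfl⟩ := hgmem
    have heq : (fun x : GPt n k E => ((x.1 i0 : ℕ) : ℝ) * Yf n k E β x)
        = Yf n k E (Function.update β i0 (β i0 + 1)) + (β i0 : ℝ) • Yf n k E β := by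
      funext x
      have := Yeval_succ n β (fun i => ((x.1 i : ℕ) : ℝ)) i0
      simp only [Pi.add_apply, Pi.smul_apply, smul_eq_mul]
      unfold Yf
      rw [this]
      ring
    rw [heq]
    apply add_mem
    · apply Submodule.subset_span
      refine ⟨Function.update β i0 (β i0 + 1), ?_, rfl⟩
      rw [Finset.sum_update_of_mem (Finset.mem_univ i0)]
      have h2 : β i0 + ∑ x ∈ Finset.univ \ {i0}, β x = ∑ x, β x := by
        rw [← Finset.erase_eq]
        exact Finset.add_sum_erase _ β (Finset.mem_univ i0)
      omega
    · exact Submodule.smul_mem _ _ (Submodule.subset_span ⟨β, by omega, rfl⟩)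
  | zero =>
    have h0 : (fun x : GPt n k E => ((x.1 i0 : ℕ) : ℝ) * (0 : GPt n k E → ℝ) x) = 0 := by
      funext x; simp
    rw [h0]; exact zero_mem _
  | add g h _ _ ihg ihh =>
    have h0 : (fun x : GPt n k E => ((x.1 i0 : ℕ) : ℝ) * (g + h) x)
        = (fun x => ((x.1 i0 : ℕ) : ℝ) * g x) + (fun x => ((x.1 i0 : ℕ) : ℝ) * h x) := by
      funext x; simp [mul_add]
    rw [h0]; exact add_mem ihg ihh
  | smul c g _ ihg =>
    have h0 : (fun x : GPt n k E => ((x.1 i0 : ℕ) : ℝ) * (c • g) x)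
        = c • (fun x => ((x.1 i0 : ℕ) : ℝ) * g x) := by
      funext x; simp; ring
    rw [h0]; exact Submodule.smul_mem _ c ihg

lemma mono_mem (n : ℕ) (k : Fin n → ℕ) (E : Finset ℕ) :
    ∀ (s : ℕ) (α : Fin n → ℕ), (∑ i, α i) = s →
      (fun x : GPt n k E => ∏ i, ((x.1 i : ℕ) : ℝ) ^ (α i)) ∈ Wspan n k E s := by
  intro s
  induction s with
  | zero =>
    intro α hα
    have h0 : ∀ i, α i = 0 := by
      intro i
      exact Finset.sum_eq_zero_iff.1 hα i (Finset.mem_univ i)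
    apply Submodule.subset_span
    refine ⟨fun _ => 0, by simp, ?_⟩
    funext x
    simp [Yf, Yeval, h0]
  | succ s ih =>
    intro α hα
    have hex : ∃ i0, α i0 ≠ 0 := by
      by_contra h
      push_neg at h
      simp [h] at hα
    obtain ⟨i0, hi0⟩ := hex
    set α' := Function.update α i0 (α i0 - 1) with hα'
    have hsum' : (∑ i, α' i) = s := by
      rw [hα', Finset.sum_update_of_mem (Finset.mem_univ i0)]
      have h2 : α i0 + ∑ x ∈ Finset.univ \ {i0}, α x = ∑ x, α x := by
        rw [← Finset.erase_eq]
        exact Finset.add_sum_erase _ α (Finset.mem_univ i0)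
      omega
    have hmono : (fun x : GPt n k E => ∏ i, ((x.1 i : ℕ) : ℝ) ^ (α i))
        = (fun x : GPt n k E => ((x.1 i0 : ℕ) : ℝ) * ∏ i, ((x.1 i : ℕ) : ℝ) ^ (α' i)) := by
      funext x
      rw [← Finset.mul_prod_erase Finset.univ _ (Finset.mem_univ i0),
        ← Finset.mul_prod_erase Finset.univ
          (fun i => ((x.1 i : ℕ) : ℝ) ^ (α' i)) (Finset.mem_univ i0)]
      have h1 : ∏ i ∈ Finset.univ.erase i0, ((x.1 i : ℕ) : ℝ) ^ (α' i)
          = ∏ i ∈ Finset.univ.erase i0, ((x.1 i : ℕ) : ℝ) ^ (α i) :=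
        Finset.prod_congr rfl (fun j hj => by
          rw [hα', Function.update_of_ne (Finset.ne_of_mem_erase hj)])
      rw [h1, hα', Function.update_self]
      have h3 : α i0 = (α i0 - 1) + 1 := by omega
      rw [h3, pow_succ]
      rw [show α i0 - 1 + 1 - 1 = α i0 - 1 from by omega]
      ring
    rw [hmono]
    exact coord_mul n k E i0 s _ (ih α' hsum')

end Main2

/-- Let `E ⊆ [0,N]` with `d < min E`. Every function on the union of layers `E̲`
representable by a polynomial of degree at most `d` lies in the span of the
falling-factorial monomials `Y^(β)` with `wt(β) ∈ [d+1, d+|E|]`. -/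
theorem stmt_10 (n : ℕ) (k : Fin n → ℕ) (hk : ∀ i, 2 ≤ k i)
    (N : ℕ) (hN : N = ∑ i, (k i - 1)) (d : ℕ) (hd : d ≤ N)
    (E : Finset ℕ) (hEN : ∀ e ∈ E, e ≤ N) (hdE : ∀ e ∈ E, d < e)
    (f : {x : ∀ i, Fin (k i) // (∑ i, (x i : ℕ)) ∈ E} → ℝ)
    (hf : ∃ p : MvPolynomial (Fin n) ℝ, p.totalDegree ≤ d ∧
      ∀ x : {x : ∀ i, Fin (k i) // (∑ i, (x i : ℕ)) ∈ E},
        f x = MvPolynomial.eval (fun i => ((x.1 i : ℕ) : ℝ)) p) :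
    f ∈ Submodule.span ℝ (Set.range
      (fun β : {β : ∀ i, Fin (k i) // (∑ i, (β i : ℕ)) ∈ Finset.Icc (d + 1) (d + E.card)} =>
        (fun x : {x : ∀ i, Fin (k i) // (∑ i, (x i : ℕ)) ∈ E} =>
          Yeval n (fun i => (β.1 i : ℕ)) (fun i => ((x.1 i : ℕ) : ℝ))))) := by
  classical
  obtain ⟨p, hpd, hpf⟩ := hf
  show f ∈ Tspan n k E d
  have hWT : Wspan n k E d ≤ Tspan n k E d := by
    apply Submodule.span_le.2
    rintro g ⟨β, hβ, rfl⟩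
    exact low_mem n k E d hdE β hβ
  have hfeq : f = ∑ α ∈ p.support, (MvPolynomial.coeff α p) •
      (fun x : GPt n k E => ∏ i, ((x.1 i : ℕ) : ℝ) ^ (α i)) := by
    funext x
    rw [hpf x, MvPolynomial.eval_eq', Finset.sum_apply]
    simp
  rw [hfeq]
  apply Submodule.sum_mem
  intro α hα
  apply Submodule.smul_mem
  apply hWT
  have h1 := MvPolynomial.le_totalDegree hα
  have h2 : (α.sum fun _ e => e) = ∑ i, α i := Finsupp.sum_fintype _ _ (fun _ => rfl)
  have h4 := mono_mem n k E (∑ i, α i) (fun i => α i) rfl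
  have h5 : Wspan n k E (∑ i, α i) ≤ Wspan n k E d := by
    apply Submodule.span_le.2
    rintro g ⟨β, hβ, rfl⟩
    refine Submodule.subset_span ⟨β, by omega, rfl⟩
  exact h5 h4
end

section
/- Let G be a uniform grid, d ∈ [0,⌊N/2⌋], and E ⊆ [N−d+1, N]. Then rank(Ev_{d,E}) = rank(Ev_{d,min E}), where Ev_{d,E} is the matrix of evaluations Y^(α)(β) over α of weight d and β ∈ G with wt(β) ∈ E. -/
open scoped Classical

/-- The evaluation matrix `Ev_{D,E}` with rows indexed by grid points of weight in `D`,
columns by grid points of weight in `E`, and entries `Y^(α)(β) = α!·C(β,α)`. -/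
noncomputable def EvMat (n : ℕ) (k : Fin n → ℕ) (D E : Finset ℕ) :
    Matrix {α : ∀ i, Fin (k i) // (∑ i, (α i : ℕ)) ∈ D}
      {β : ∀ i, Fin (k i) // (∑ i, (β i : ℕ)) ∈ E} ℝ := fun α β =>
  ∏ i, ∏ t ∈ Finset.range (α.1 i : ℕ), (((β.1 i : ℕ) : ℝ) - (t : ℝ))

namespace Stmt11Aux

variable {n : ℕ} {k : Fin n → ℕ}

/-- The column of the evaluation matrix indexed by a raw grid point `β`. -/
noncomputable def colv (n : ℕ) (k : Fin n → ℕ) (d : ℕ) (β : ∀ i, Fin (k i)) :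
    {α : ∀ i, Fin (k i) // (∑ i, (α i : ℕ)) ∈ ({d} : Finset ℕ)} → ℝ := fun α =>
  ∏ i, ∏ t ∈ Finset.range (α.1 i : ℕ), (((β i : ℕ) : ℝ) - (t : ℝ))

/-- Decrement the `i`-th coordinate of `β` (does nothing if it is `0`). -/
def dec (β : ∀ i, Fin (k i)) (i : Fin n) : ∀ j, Fin (k j) :=
  Function.update β i ⟨(β i : ℕ) - 1, lt_of_le_of_lt (Nat.sub_le _ _) (β i).isLt⟩

lemma shift_prod (b : ℝ) (a : ℕ) :
    b * ∏ t ∈ Finset.range a, (b - 1 - (t : ℝ)) =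
      (b - a) * ∏ t ∈ Finset.range a, (b - (t : ℝ)) := by
  induction a with
  | zero => simp
  | succ a ih =>
    rw [Finset.prod_range_succ, Finset.prod_range_succ, ← mul_assoc, ih]
    push_cast
    ring

lemma sum_dec (β : ∀ i, Fin (k i)) (i : Fin n) (hi : 0 < (β i : ℕ)) :
    ∑ j, ((dec β i) j : ℕ) = (∑ j, (β j : ℕ)) - 1 := by
  have h1 : ∀ j, ((dec β i) j : ℕ) =
      Function.update (fun j => ((β j : ℕ))) i ((β i : ℕ) - 1) j := by
    intro j
    by_cases hj : j = i
    · subst hj; simp [dec]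
    · simp [dec, Function.update_of_ne hj]
  have h2 : ∑ j, (β j : ℕ) = (β i : ℕ) + ∑ j ∈ Finset.univ.erase i, (β j : ℕ) :=
    (Finset.add_sum_erase _ _ (Finset.mem_univ i)).symm
  rw [Finset.sum_congr rfl (fun j _ => h1 j),
    Finset.sum_update_of_mem (Finset.mem_univ i)]
  rw [Finset.sdiff_singleton_eq_erase]
  omega

lemma col_dec (d : ℕ) (β : ∀ i, Fin (k i)) (i : Fin n)
    (α : {α : ∀ i, Fin (k i) // (∑ i, (α i : ℕ)) ∈ ({d} : Finset ℕ)}) :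
    ((β i : ℕ) : ℝ) * colv n k d (dec β i) α =
      (((β i : ℕ) : ℝ) - ((α.1 i : ℕ) : ℝ)) * colv n k d β α := by
  rcases Nat.eq_zero_or_pos (β i : ℕ) with hi | hi
  · have hdec : dec β i = β := by
      have : (⟨(β i : ℕ) - 1, lt_of_le_of_lt (Nat.sub_le _ _) (β i).isLt⟩ : Fin (k i)) = β i :=
        Fin.ext (by simp [hi])
      rw [dec, this, Function.update_eq_self]
    rw [hdec, hi]
    by_cases hα : (α.1 i : ℕ) = 0
    · rw [hα]; push_cast; ring
    · have hz : colv n k d β α = 0 := by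
        refine Finset.prod_eq_zero (Finset.mem_univ i) ?_
        refine Finset.prod_eq_zero (Finset.mem_range.2 (Nat.pos_of_ne_zero hα)) ?_
        rw [hi]; push_cast; ring
      rw [hz]; push_cast; ring
  · have hsplit : ∀ γ : (∀ j, Fin (k j)), colv n k d γ α =
        (∏ t ∈ Finset.range (α.1 i : ℕ), (((γ i : ℕ) : ℝ) - (t : ℝ))) *
          ∏ j ∈ Finset.univ.erase i,
            ∏ t ∈ Finset.range (α.1 j : ℕ), (((γ j : ℕ) : ℝ) - (t : ℝ)) := fun γ =>
      (Finset.mul_prod_erase _ _ (Finset.mem_univ i)).symm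
    rw [hsplit (dec β i), hsplit β]
    have hrest : ∀ j ∈ Finset.univ.erase i,
        (∏ t ∈ Finset.range (α.1 j : ℕ), (((dec β i j : ℕ) : ℝ) - (t : ℝ))) =
          ∏ t ∈ Finset.range (α.1 j : ℕ), (((β j : ℕ) : ℝ) - (t : ℝ)) := by
      intro j hj
      rw [dec, Function.update_of_ne (Finset.ne_of_mem_erase hj)]
    rw [Finset.prod_congr rfl hrest]
    have hkey : ((β i : ℕ) : ℝ) *
        ∏ t ∈ Finset.range (α.1 i : ℕ), (((dec β i i : ℕ) : ℝ) - (t : ℝ)) =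
        (((β i : ℕ) : ℝ) - ((α.1 i : ℕ) : ℝ)) *
          ∏ t ∈ Finset.range (α.1 i : ℕ), (((β i : ℕ) : ℝ) - (t : ℝ)) := by
      have hdi : ((dec β i i : ℕ) : ℝ) = ((β i : ℕ) : ℝ) - 1 := by
        simp only [dec, Function.update_self]
        push_cast [Nat.cast_sub hi]
        ring
      simp only [hdi]
      exact shift_prod _ _
    calc ((β i : ℕ) : ℝ) * ((∏ t ∈ Finset.range (α.1 i : ℕ), (((dec β i i : ℕ) : ℝ) - (t : ℝ))) *
          ∏ j ∈ Finset.univ.erase i, ∏ t ∈ Finset.range (α.1 j : ℕ), (((β j : ℕ) : ℝ) - (t : ℝ)))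
        = (((β i : ℕ) : ℝ) * ∏ t ∈ Finset.range (α.1 i : ℕ), (((dec β i i : ℕ) : ℝ) - (t : ℝ))) *
          ∏ j ∈ Finset.univ.erase i, ∏ t ∈ Finset.range (α.1 j : ℕ), (((β j : ℕ) : ℝ) - (t : ℝ)) := by
          ring
      _ = _ := by rw [hkey]; ring

lemma col_eq_sum (d : ℕ) (β : ∀ i, Fin (k i)) (hβ : d < ∑ i, (β i : ℕ)) :
    colv n k d β = ∑ i, (((β i : ℕ) : ℝ) / (((∑ j, (β j : ℕ) : ℕ) : ℝ) - (d : ℝ))) •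
      colv n k d (dec β i) := by
  set e : ℕ := ∑ j, (β j : ℕ) with he
  have hne : ((e : ℕ) : ℝ) - (d : ℝ) ≠ 0 := by
    have : (d : ℝ) < (e : ℝ) := by exact_mod_cast hβ
    linarith
  funext α
  have hα : (∑ i, (α.1 i : ℕ)) = d := Finset.mem_singleton.mp α.2
  rw [Finset.sum_apply]
  have hterm : ∀ i ∈ Finset.univ, ((((β i : ℕ) : ℝ) / (((e : ℕ) : ℝ) - (d : ℝ))) •
      colv n k d (dec β i)) α =
      ((((β i : ℕ) : ℝ) - ((α.1 i : ℕ) : ℝ)) * colv n k d β α) * (((e : ℕ) : ℝ) - (d : ℝ))⁻¹ := by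
    intro i _
    rw [Pi.smul_apply, smul_eq_mul, div_eq_mul_inv, mul_comm (((β i : ℕ) : ℝ)) _,
      mul_assoc, col_dec]
    ring
  rw [Finset.sum_congr rfl hterm, ← Finset.sum_mul, ← Finset.sum_mul]
  have hsum : (∑ i, (((β i : ℕ) : ℝ) - ((α.1 i : ℕ) : ℝ))) = ((e : ℕ) : ℝ) - (d : ℝ) := by
    rw [Finset.sum_sub_distrib]
    rw [← Nat.cast_sum, ← Nat.cast_sum, ← he, hα]
  rw [hsum]
  field_simp

lemma mem_span (d m : ℕ) (hdm : d < m) :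
    ∀ c (β : ∀ i, Fin (k i)), (∑ i, (β i : ℕ)) = m + c →
      colv n k d β ∈ Submodule.span ℝ
        {v | ∃ β' : ∀ i, Fin (k i), (∑ i, (β' i : ℕ)) = m ∧ v = colv n k d β'} := by
  intro c
  induction c with
  | zero =>
    intro β hβ
    exact Submodule.subset_span ⟨β, by omega, rfl⟩
  | succ c ih =>
    intro β hβ
    have hd : d < ∑ i, (β i : ℕ) := by omega
    rw [col_eq_sum d β hd]
    refine Submodule.sum_mem _ ?_
    intro i _
    by_cases hi : (β i : ℕ) = 0
    · rw [hi]
      simp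
    · refine Submodule.smul_mem _ _ (ih (dec β i) ?_)
      rw [sum_dec β i (Nat.pos_of_ne_zero hi)]
      omega

end Stmt11Aux

open Stmt11Aux in
/-- For `d ∈ [0,⌊N/2⌋]` and `E ⊆ [N-d+1, N]`, `rank(Ev_{d,E}) = rank(Ev_{d,min E})`. -/
theorem stmt_11 (n : ℕ) (k : Fin n → ℕ) (hk : ∀ i, 2 ≤ k i)
    (N : ℕ) (hN : N = ∑ i, (k i - 1)) (d : ℕ) (hd : d ≤ N / 2)
    (E : Finset ℕ) (hE : E.Nonempty) (hEsub : ∀ e ∈ E, N - d + 1 ≤ e ∧ e ≤ N) :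
    (EvMat n k {d} E).rank = (EvMat n k {d} {E.min' hE}).rank := by
  set m : ℕ := E.min' hE with hm
  obtain ⟨hm1, hm2⟩ := hEsub m (E.min'_mem hE)
  have hdm : d < m := by omega
  -- the span set
  set S : Set ({α : ∀ i, Fin (k i) // (∑ i, (α i : ℕ)) ∈ ({d} : Finset ℕ)} → ℝ) :=
    {v | ∃ β' : ∀ i, Fin (k i), (∑ i, (β' i : ℕ)) = m ∧ v = colv n k d β'} with hS
  have hSm : Set.range ((EvMat n k {d} ({m} : Finset ℕ)).transpose) = S := by
    ext v
    constructor
    · rintro ⟨β, rfl⟩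
      exact ⟨β.1, Finset.mem_singleton.mp β.2, rfl⟩
    · rintro ⟨β', hβ', rfl⟩
      exact ⟨⟨β', Finset.mem_singleton.mpr hβ'⟩, rfl⟩
  have hspan : Submodule.span ℝ (Set.range ((EvMat n k {d} E).transpose)) =
      Submodule.span ℝ (Set.range ((EvMat n k {d} ({m} : Finset ℕ)).transpose)) := by
    rw [hSm]
    apply le_antisymm
    · rw [Submodule.span_le]
      rintro v ⟨β, rfl⟩
      have hge : m ≤ ∑ i, (β.1 i : ℕ) := E.min'_le _ β.2
      have := mem_span (k := k) d m hdm ((∑ i, (β.1 i : ℕ)) - m) β.1 (by omega)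
      exact this
    · rw [Submodule.span_le]
      rintro v ⟨β', hβ', rfl⟩
      refine Submodule.subset_span ?_
      have hmE : m ∈ E := E.min'_mem hE
      exact ⟨⟨β', by rw [hβ']; exact hmE⟩, rfl⟩
  rw [Matrix.rank_eq_finrank_span_cols, Matrix.rank_eq_finrank_span_cols, Matrix.col, Matrix.col, hspan]
end
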